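/- arXiv:2009.07318 — 2 statements merged into one kernel-verified Lean document; each statement's English description precedes it below -/
import Mathlib

section
/- For x ∈ D₁ = ℂ \ ((−∞,−1] ∪ [1,∞)), let u = x + i√(1−x²) and v = x − i√(1−x²), with the principal square root. Then u·v = 1, u ∉ (−∞, 0], and v ∉ (−∞, 0]. -/
/-- The doubly slit plane `ℂ \ ((−∞,−1] ∪ [1,∞))`. -/
def domD1 : Set ℂ := {z : ℂ | z.im = 0 ∧ (z.re ≤ -1 ∨ 1 ≤ z.re)}ᶜ

/-- Principal square root of `1 - x²`. -/
noncomputable def sqrt1mx2 (x : ℂ) : ℂ := (1 - x ^ 2) ^ ((1 : ℂ) / 2)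

/-!
`u` and `v` are the roots of `t² - 2xt + 1`, so `u v = 1` and `u + v = 2x`. If one of them were a
real `r ≤ 0`, then `r ≠ 0` and the other would be `r⁻¹`, making `2x = r + r⁻¹ ≤ -2` real, so `x`
would lie on the slit `(−∞,−1]`.
-/

lemma sqrt1mx2_sq (x : ℂ) : sqrt1mx2 x ^ 2 = 1 - x ^ 2 := by
  rw [sqrt1mx2, one_div, Complex.cpow_ofNat_inv_pow]

lemma Real.add_inv_le_neg_two {r : ℝ} (hr : r < 0) : r + r⁻¹ ≤ -2 := by
  have h : r * r⁻¹ = 1 := mul_inv_cancel₀ hr.ne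
  nlinarith [sq_nonneg (r + 1), inv_lt_zero.mpr hr]

lemma Complex.add_im_eq_zero_and_add_re_le_neg_two_of_mul_eq_one {a b : ℂ} (hab : a * b = 1)
    (him : a.im = 0) (hre : a.re ≤ 0) : (a + b).im = 0 ∧ (a + b).re ≤ -2 := by
  have ha_real : a = (a.re : ℂ) := Complex.ext rfl (by simpa using him)
  have hre_ne : a.re ≠ 0 := by
    rintro h
    rw [ha_real, h, Complex.ofReal_zero, zero_mul] at hab
    exact zero_ne_one hab
  have hb : b = ((a.re)⁻¹ : ℝ) := by
    rw [Complex.ofReal_inv, ← ha_real]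
    exact (eq_inv_of_mul_eq_one_right hab)
  have hsum : a + b = ((a.re + (a.re)⁻¹ : ℝ) : ℂ) := by
    rw [hb, Complex.ofReal_add, ← ha_real]
  rw [hsum, Complex.ofReal_im, Complex.ofReal_re]
  exact ⟨rfl, Real.add_inv_le_neg_two (lt_of_le_of_ne hre hre_ne)⟩

lemma not_nonpos_real_of_mul_eq_one_of_add_eq {x a b : ℂ} (hx : x ∈ domD1) (hab : a * b = 1)
    (hsum : a + b = 2 * x) : ¬ (a.im = 0 ∧ a.re ≤ 0) := by
  rintro ⟨him, hre⟩
  obtain ⟨hsum_im, hsum_re⟩ :=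
    Complex.add_im_eq_zero_and_add_re_le_neg_two_of_mul_eq_one hab him hre
  rw [hsum] at hsum_im hsum_re
  simp only [Complex.mul_im, Complex.mul_re, Complex.re_ofNat, Complex.im_ofNat] at hsum_im hsum_re
  exact hx ⟨by linarith, Or.inl (by linarith)⟩

theorem uv_properties (x : ℂ) (hx : x ∈ domD1) :
    let u : ℂ := x + Complex.I * sqrt1mx2 x
    let v : ℂ := x - Complex.I * sqrt1mx2 x
    u * v = 1 ∧ ¬ (u.im = 0 ∧ u.re ≤ 0) ∧ ¬ (v.im = 0 ∧ v.re ≤ 0) := by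
  intro u v
  have huv : u * v = 1 := by
    linear_combination sqrt1mx2_sq x - sqrt1mx2 x ^ 2 * Complex.I_sq
  have hsum : u + v = 2 * x := by ring
  exact ⟨huv, not_nonpos_real_of_mul_eq_one_of_add_eq hx huv hsum,
    not_nonpos_real_of_mul_eq_one_of_add_eq hx (by rw [mul_comm, huv]) (by rw [add_comm, hsum])⟩
end

section
/- Let θ ∈ (0, π), and ν, μ ∈ ℂ with ν + μ ∉ −ℕ and Re μ < 0. Then the series ∑_{k=0}^∞ (Γ(ν+μ+k+1)/Γ(ν+k+3/2))·((μ+1/2)_k/k!)·cos((ν+μ+2k+1)θ) converges absolutely. -/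
/-!
Euler's limit formula `Γ(s + n + 1) / (n ^ s * n!) → 1`, pushed from the right half-plane to every
`s ∈ ℂ` (poles included) through `Γ(s + 1) = s Γ(s)`, gives `Γ(s + n) / Γ(t + n) ∼ n ^ (s - t)`.
Hence the coefficient of the series is `∼ k ^ (2μ - 1) / Γ(μ + 1/2)`, while the cosine stays bounded
because the imaginary part of its argument does not depend on `k`; since `Re (2μ - 1) < -1`, the
series is dominated by a convergent `p`-series.
-/

open Filter Asymptotics Topology Nat Complex

lemma ascPochhammer_eval_eq_prod_range {R : Type*} [CommSemiring R] (n : ℕ) (r : R) :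
    (ascPochhammer R n).eval r = ∏ j ∈ Finset.range n, (r + j) := by
  induction n with
  | zero => simp
  | succ n ih => simp [ascPochhammer_succ_eval, ih, Finset.prod_range_succ]

namespace Complex

lemma eventually_add_natCast_ne_zero (s : ℂ) : ∀ᶠ n : ℕ in atTop, s + n ≠ 0 := by
  filter_upwards [eventually_gt_atTop ⌈‖s‖⌉₊] with n hn h
  have : ‖s‖ = n := by rw [eq_neg_of_add_eq_zero_left h, norm_neg, norm_natCast]
  exact (Nat.lt_of_ceil_lt hn).ne this

lemma norm_cos_le_exp_abs_im (z : ℂ) : ‖cos z‖ ≤ Real.exp |z.im| := by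
  have hexp (w : ℂ) (hw : |w.re| = |z.im|) : ‖exp w‖ ≤ Real.exp |z.im| := by
    rw [norm_exp, ← hw]; exact Real.exp_le_exp.2 (le_abs_self _)
  rw [cos, norm_div, Complex.norm_two]
  have := norm_add_le (exp (z * I)) (exp (-z * I))
  have h1 := hexp (z * I) (by simp)
  have h2 := hexp (-z * I) (by simp)
  linarith

lemma Gamma_add_nat_eq_mul_prod {s : ℂ} (hs : Gamma s ≠ 0) (n : ℕ) :
    Gamma (s + n) = Gamma s * ∏ j ∈ Finset.range n, (s + j) := by
  have hs' : ∀ k : ℕ, s ≠ -k := fun k hk => hs ((Gamma_eq_zero_iff s).2 ⟨k, hk⟩)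
  rw [← ascPochhammer_eval_eq_prod_range, ← Gamma_add_nat_div_Gamma_eq s hs',
    mul_div_cancel₀ _ hs]

lemma isEquivalent_Gamma_add_one_add_nat {s : ℂ} (hs : Gamma s ≠ 0) :
    (fun n : ℕ => Gamma (s + 1 + n)) ~[atTop] fun n => (n : ℂ) ^ s * n ! := by
  refine isEquivalent_of_tendsto_one ?_
  have h : Tendsto (fun n => Gamma s / GammaSeq s n) atTop (𝓝 1) := by
    have := (tendsto_const_nhds (x := Gamma s)).div (GammaSeq_tendsto_Gamma s) hs
    rwa [div_self hs] at this
  refine h.congr fun n => ?_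
  rw [GammaSeq, div_div_eq_mul_div, ← Gamma_add_nat_eq_mul_prod hs, Pi.div_apply, Nat.cast_succ,
    add_comm (n : ℂ), add_assoc]

lemma isEquivalent_Gamma_add_nat_of_add_one {s : ℂ}
    (h : (fun n : ℕ => Gamma (s + 1 + n)) ~[atTop] fun n => (n : ℂ) ^ s * n !) :
    (fun n : ℕ => Gamma (s + n)) ~[atTop] fun n => (n : ℂ) ^ (s - 1) * n ! := by
  have hlin : (fun n : ℕ => s + n) ~[atTop] fun n => (n : ℂ) :=
    IsEquivalent.refl.const_add_of_norm_tendsto_atTop <| by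
      simpa [Function.comp_def] using tendsto_natCast_atTop_atTop (R := ℝ)
  refine ((h.div hlin).congr_left ?_).congr_right ?_
  · filter_upwards [eventually_add_natCast_ne_zero s] with n hn
    simp only [Pi.div_apply]
    rw [add_right_comm, Gamma_add_one _ hn, mul_div_cancel_left₀ _ hn]
  · filter_upwards [eventually_ne_atTop 0] with n hn
    have hn' : (n : ℂ) ≠ 0 := Nat.cast_ne_zero.2 hn
    simp only [Pi.div_apply]
    rw [cpow_sub _ _ hn', cpow_one]
    ring

theorem isEquivalent_Gamma_add_nat (s : ℂ) :
    (fun n : ℕ => Gamma (s + n)) ~[atTop] fun n => (n : ℂ) ^ (s - 1) * n ! := by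
  obtain ⟨m, hm⟩ := exists_nat_gt (-s.re)
  induction m generalizing s with
  | zero =>
    exact isEquivalent_Gamma_add_nat_of_add_one
      (isEquivalent_Gamma_add_one_add_nat (Gamma_ne_zero_of_re_pos (by simpa using hm)))
  | succ m ih =>
    refine isEquivalent_Gamma_add_nat_of_add_one ?_
    simpa using ih (s + 1) (by rw [add_re, one_re]; push_cast at hm; linarith)

theorem isEquivalent_Gamma_add_nat_div (s t : ℂ) :
    (fun n : ℕ => Gamma (s + n) / Gamma (t + n)) ~[atTop] fun n => (n : ℂ) ^ (s - t) := by
  refine ((isEquivalent_Gamma_add_nat s).div (isEquivalent_Gamma_add_nat t)).congr_right ?_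
  filter_upwards [eventually_ne_atTop 0] with n hn
  have hn' : (n : ℂ) ≠ 0 := Nat.cast_ne_zero.2 hn
  simp only [Pi.div_apply]
  rw [show s - t = (s - 1) - (t - 1) by ring, cpow_sub (s - 1) (t - 1) hn',
    mul_div_mul_right _ _ (Nat.cast_ne_zero.2 n.factorial_ne_zero)]

end Complex

theorem fourier_series_abs_convergent_general (θ : ℝ)
    (ν μ : ℂ) (hμ : μ.re < 0) :
    Summable (fun k : ℕ =>
      ‖Complex.Gamma (ν + μ + k + 1) / Complex.Gamma (ν + k + 3 / 2) *
        (Complex.Gamma (μ + 1 / 2 + k) / Complex.Gamma (μ + 1 / 2) / (Nat.factorial k : ℂ)) *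
        Complex.cos ((ν + μ + 2 * k + 1) * (θ : ℂ))‖) := by
  have hcoeff : (fun k : ℕ => Gamma (ν + μ + 1 + k) / Gamma (ν + 3 / 2 + k) *
      (Gamma (μ + 1 / 2 + k) / Gamma (1 + k))) ~[atTop] fun k => 1 / (k : ℂ) ^ (1 - 2 * μ) := by
    refine ((isEquivalent_Gamma_add_nat_div _ _).mul
      (isEquivalent_Gamma_add_nat_div _ _)).congr_right ?_
    filter_upwards [eventually_ne_atTop 0] with k hk
    rw [Pi.mul_apply, ← cpow_add _ _ (Nat.cast_ne_zero.2 hk), one_div ((k : ℂ) ^ _), ← cpow_neg]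
    ring_nf
  have hcos : (fun k : ℕ => cos ((ν + μ + 2 * k + 1) * θ)) =O[atTop] fun _ => (1 : ℂ) := by
    refine IsBigO.of_bound (Real.exp |(ν.im + μ.im) * θ|) (Eventually.of_forall fun k => ?_)
    simpa using norm_cos_le_exp_abs_im ((ν + μ + 2 * k + 1) * θ)
  refine (summable_of_isBigO_nat' (summable_one_div_nat_cpow (p := 1 - 2 * μ) |>.2 ?_) ?_).norm
  · simp only [sub_re, one_re, mul_re, re_ofNat, im_ofNat, zero_mul, sub_zero]
    linarith
  · refine (hcoeff.isBigO.mul (hcos.const_mul_left (Gamma (μ + 1 / 2))⁻¹)).congr ?_ (by simp)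
    intro k
    rw [add_comm 1 (k : ℂ), Gamma_nat_eq_factorial]
    ring_nf

theorem fourier_series_abs_convergent (θ : ℝ) (hθ0 : 0 < θ) (hθπ : θ < Real.pi)
    (ν μ : ℂ) (hνμ : ∀ n : ℕ, ν + μ ≠ -(n + 1 : ℂ)) (hμ : μ.re < 0) :
    Summable (fun k : ℕ =>
      ‖Complex.Gamma (ν + μ + k + 1) / Complex.Gamma (ν + k + 3 / 2) *
        (Complex.Gamma (μ + 1 / 2 + k) / Complex.Gamma (μ + 1 / 2) / (Nat.factorial k : ℂ)) *
        Complex.cos ((ν + μ + 2 * k + 1) * (θ : ℂ))‖) :=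
  fourier_series_abs_convergent_general θ ν μ hμ
end
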